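/- arXiv:2402.06019 — 2 statements merged into one kernel-verified Lean document; each statement's English description precedes it below -/
import Mathlib

section
/- The cone generated by the columns of eeᵀ − I (i.e., by the vectors e − e_i, i ∈ [r]) is contained in the cone C = {x ∈ ℝ^r : eᵀx ≥ √(r-1)·‖x‖₂}. -/
noncomputable def enorm2 {r : ℕ} (x : Fin r → ℝ) : ℝ := Real.sqrt (∑ i, (x i) ^ 2)

def sscCone (r : ℕ) : Set (Fin r → ℝ) :=
  {x | Real.sqrt ((r : ℝ) - 1) * enorm2 x ≤ ∑ i, x i}

def coneOf {r n : ℕ} (H : Matrix (Fin r) (Fin n) ℝ) : Set (Fin r → ℝ) :=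
  {x | ∃ y : Fin n → ℝ, (∀ j, 0 ≤ y j) ∧ H.mulVec y = x}

/-! Every point of the cone is `x = s • e - y` with `y ≥ 0` and `s = ∑ yⱼ`. Then
`eᵀx = (r - 1) s`, while `‖x‖² = (r - 2) s² + ∑ yⱼ² ≤ (r - 1) s²` because `∑ yⱼ² ≤ (∑ yⱼ)²`
for nonnegative `y`; hence `√(r - 1) ‖x‖ ≤ (r - 1) s = eᵀx`. -/

open Finset Matrix

section
variable {ι R : Type*} [Fintype ι]

theorem ones_sub_one_mulVec_apply [DecidableEq ι] [CommRing R] (y : ι → R) (i : ι) :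
    (((of fun _ _ => (1 : R)) - 1 : Matrix ι ι R) *ᵥ y) i = (∑ j, y j) - y i := by
  simp [mulVec, dotProduct, sub_mul, one_apply, sum_sub_distrib]

theorem sum_sum_sub [CommRing R] (y : ι → R) :
    ∑ i, ((∑ j, y j) - y i) = ((Fintype.card ι : R) - 1) * ∑ j, y j := by
  rw [sum_sub_distrib, sum_const, card_univ, nsmul_eq_mul]
  ring

theorem sum_sq_sum_sub_le [CommRing R] [PartialOrder R] [IsOrderedRing R] {y : ι → R}
    (hy : ∀ i, 0 ≤ y i) :
    ∑ i, ((∑ j, y j) - y i) ^ 2 ≤ ((Fintype.card ι : R) - 1) * (∑ j, y j) ^ 2 := by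
  have expand : ∑ i, ((∑ j, y j) - y i) ^ 2
      = ((Fintype.card ι : R) - 2) * (∑ j, y j) ^ 2 + ∑ j, y j ^ 2 := by
    simp only [sub_sq, sum_add_distrib, sum_sub_distrib, ← mul_sum, sum_const, card_univ,
      nsmul_eq_mul]
    ring
  have hsq := sum_sq_le_sq_sum_of_nonneg (s := univ) fun i _ => hy i
  rw [expand]
  linear_combination hsq

end

theorem mem_sscCone_of_sum_sq_le {r : ℕ} (hr : 1 ≤ r) {x : Fin r → ℝ} {s : ℝ} (hs : 0 ≤ s)
    (hsq : ∑ i, x i ^ 2 ≤ ((r : ℝ) - 1) * s ^ 2) (hsum : ∑ i, x i = ((r : ℝ) - 1) * s) :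
    x ∈ sscCone r := by
  have ht : (0 : ℝ) ≤ r - 1 := sub_nonneg.2 (by exact_mod_cast hr)
  have hnorm : enorm2 x ≤ √((r : ℝ) - 1) * s := by
    calc enorm2 x ≤ √(((r : ℝ) - 1) * s ^ 2) := Real.sqrt_le_sqrt hsq
      _ = √((r : ℝ) - 1) * s := by rw [Real.sqrt_mul ht, Real.sqrt_sq hs]
  calc √((r : ℝ) - 1) * enorm2 x ≤ √((r : ℝ) - 1) * (√((r : ℝ) - 1) * s) := by gcongr
    _ = ∑ i, x i := by rw [← mul_assoc, Real.mul_self_sqrt ht, hsum]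

theorem cone_ee_sub_I_subset_sscCone_general {r : ℕ} :
    coneOf ((Matrix.of fun _ _ => (1 : ℝ)) - (1 : Matrix (Fin r) (Fin r) ℝ)) ⊆ sscCone r := by
  rintro _ ⟨y, hy, rfl⟩
  rcases Nat.eq_zero_or_pos r with rfl | hr
  · simp [sscCone, enorm2]
  refine mem_sscCone_of_sum_sq_le hr (univ.sum_nonneg fun j _ => hy j) ?_ ?_
  · simpa only [ones_sub_one_mulVec_apply, Fintype.card_fin] using sum_sq_sum_sub_le hy
  · simpa only [ones_sub_one_mulVec_apply, Fintype.card_fin] using sum_sum_sub y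

/-- `cone(eeᵀ - I) ⊆ C`. -/
theorem cone_ee_sub_I_subset_sscCone {r : ℕ} (hr : 2 ≤ r) :
    coneOf ((Matrix.of fun _ _ => (1 : ℝ)) - (1 : Matrix (Fin r) (Fin r) ℝ)) ⊆ sscCone r :=
  cone_ee_sub_I_subset_sscCone_general
end

section
/- A matrix H ∈ ℝ₊^{r×n} satisfies the SSC if and only if (i) H satisfies the NC-SSC, and (ii) the maximum of ‖x‖₂ over {x : eᵀx = 1, Hᵀx ≥ 0, −1 ≤ x_i ≤ 1 ∀i} equals 1 with the set of maximizers equal to {e_i}_{i=1}^r. -/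
open Finset Matrix

section ConicHull

variable {ι E : Type*} [AddCommGroup E] [Module ℝ E]

def conicHull (v : ι → E) (s : Finset ι) : Set E :=
  {x | ∃ c : ι → ℝ, (∀ i ∈ s, 0 ≤ c i) ∧ ∑ i ∈ s, c i • v i = x}

theorem conicHull_mono (v : ι → E) {s t : Finset ι} (hst : s ⊆ t) :
    conicHull v s ⊆ conicHull v t := by
  classical
  rintro _ ⟨c, hc, rfl⟩
  refine ⟨fun i => if i ∈ s then c i else 0, fun i _ => ?_, ?_⟩
  · dsimp only
    split_ifs with hi
    exacts [hc i hi, le_rfl]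
  · simp only [ite_smul, zero_smul, sum_ite_mem, inter_eq_right.mpr hst]

variable [DecidableEq ι] in
/-- Carathéodory's step: move along the relation `d` until the first coefficient vanishes. -/
theorem exists_mem_conicHull_erase (v : ι → E) {s : Finset ι} {d : ι → ℝ}
    (hd : ∑ i ∈ s, d i • v i = 0) (hpos : ∃ i ∈ s, 0 < d i) {x : E} (hx : x ∈ conicHull v s) :
    ∃ k ∈ s, x ∈ conicHull v (s.erase k) := by
  obtain ⟨c, hc, rfl⟩ := hx
  obtain ⟨k, hk, hmin⟩ := (s.filter (0 < d ·)).exists_min_image (fun i => c i / d i)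
    (by simpa [Finset.Nonempty] using hpos)
  rw [mem_filter] at hk
  set t := c k / d k
  have ht : 0 ≤ t := div_nonneg (hc k hk.1) hk.2.le
  refine ⟨k, hk.1, fun i => c i - t * d i, fun i hi => ?_, ?_⟩
  · have his := mem_of_mem_erase hi
    rcases lt_or_ge 0 (d i) with hdi | hdi
    · linarith [(le_div_iff₀ hdi).mp (hmin i (mem_filter.mpr ⟨his, hdi⟩))]
    · nlinarith [hc i his]
  · rw [sum_erase _ (by simp [t, div_mul_cancel₀ _ hk.2.ne'])]
    simp only [sub_smul, sum_sub_distrib, mul_smul, ← smul_sum, hd, smul_zero, sub_zero]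

variable [DecidableEq ι] in
theorem conicHull_eq_biUnion_erase (v : ι → E) {s : Finset ι} (hv : ¬LinearIndepOn ℝ v s) :
    conicHull v s = ⋃ k ∈ s, conicHull v (s.erase k) := by
  refine subset_antisymm (fun x hx => ?_)
    (Set.iUnion₂_subset fun k _ => conicHull_mono v (erase_subset k s))
  obtain ⟨d, hd, k, hk, hdk⟩ := not_linearIndepOn_finset_iff.mp hv
  rcases hdk.lt_or_gt with hneg | hpos
  · simpa using exists_mem_conicHull_erase v (d := -d) (by simp [hd])
      ⟨k, hk, by simpa using hneg⟩ hx
  · simpa using exists_mem_conicHull_erase v hd ⟨k, hk, hpos⟩ hx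

variable [TopologicalSpace E] [IsTopologicalAddGroup E] [ContinuousSMul ℝ E] [T2Space E]

theorem isClosed_conicHull_of_linearIndepOn (v : ι → E) {s : Finset ι}
    (hv : LinearIndepOn ℝ v s) : IsClosed (conicHull v s) := by
  classical
  have himage : conicHull v s =
      Fintype.linearCombination ℝ (fun i : s => v i) '' Set.Ici 0 := by
    ext x
    constructor
    · rintro ⟨c, hc, rfl⟩
      exact ⟨fun i => c i, fun i => hc i i.2, by
        rw [Fintype.linearCombination_apply, sum_coe_sort s (fun i => c i • v i)]⟩
    · rintro ⟨w, hw, rfl⟩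
      refine ⟨fun i => if h : i ∈ s then w ⟨i, h⟩ else 0,
        fun i hi => by simpa [hi] using hw ⟨i, hi⟩, ?_⟩
      rw [Fintype.linearCombination_apply, ← sum_coe_sort s]
      simp
  have hinj := hv.linearIndependent.fintypeLinearCombination_injective
  rw [himage]
  exact (LinearMap.isClosedEmbedding_of_injective (LinearMap.ker_eq_bot.mpr hinj)).isClosedMap _
    isClosed_Ici

theorem isClosed_conicHull (v : ι → E) (s : Finset ι) : IsClosed (conicHull v s) := by
  classical
  induction s using strongInduction with
  | H s ih =>
    by_cases hv : LinearIndepOn ℝ v s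
    · exact isClosed_conicHull_of_linearIndepOn v hv
    · rw [conicHull_eq_biUnion_erase v hv]
      exact s.finite_toSet.isClosed_biUnion fun k hk => ih _ (erase_ssubset hk)

end ConicHull

section SSC

variable {r n : ℕ}

theorem enorm2_nonneg (x : Fin r → ℝ) : 0 ≤ enorm2 x := Real.sqrt_nonneg _

theorem sq_enorm2 (x : Fin r → ℝ) : enorm2 x ^ 2 = ∑ i, x i ^ 2 :=
  Real.sq_sqrt (sum_nonneg fun i _ => sq_nonneg (x i))

theorem abs_le_enorm2 (x : Fin r → ℝ) (i : Fin r) : |x i| ≤ enorm2 x :=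
  Real.abs_le_sqrt (single_le_sum (fun j _ => sq_nonneg (x j)) (mem_univ i))

theorem enorm2_smul (c : ℝ) (x : Fin r → ℝ) : enorm2 (c • x) = |c| * enorm2 x := by
  simp only [enorm2, Pi.smul_apply, smul_eq_mul, mul_pow, ← mul_sum,
    Real.sqrt_mul (sq_nonneg c), Real.sqrt_sq_eq_abs]

theorem enorm2_eq_zero {x : Fin r → ℝ} : enorm2 x = 0 ↔ x = 0 := by
  simp [enorm2, Real.sqrt_eq_zero (sum_nonneg fun i _ => sq_nonneg (x i)),
    sum_eq_zero_iff_of_nonneg fun i _ => sq_nonneg (x i), funext_iff]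

theorem enorm2_single (i : Fin r) : enorm2 (Pi.single i 1) = 1 := by
  simp [enorm2, Pi.single_apply]

theorem single_eq_ite (i : Fin r) : Pi.single i 1 = fun k => if k = i then (1 : ℝ) else 0 :=
  funext fun k => Pi.single_apply i (1 : ℝ) k

def dualCone (H : Matrix (Fin r) (Fin n) ℝ) : Set (Fin r → ℝ) :=
  {q | ∀ j, 0 ≤ ∑ i, H i j * q i}

theorem coneOf_eq_conicHull (H : Matrix (Fin r) (Fin n) ℝ) :
    coneOf H = conicHull (fun j i => H i j) univ := by
  have hmul (y : Fin n → ℝ) : ∑ j, y j • (fun i => H i j) = H *ᵥ y := by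
    ext i; simp [Matrix.mulVec, dotProduct, mul_comm]
  ext x
  simp only [coneOf, conicHull, mem_univ, true_implies, hmul]

theorem isClosed_coneOf (H : Matrix (Fin r) (Fin n) ℝ) : IsClosed (coneOf H) :=
  coneOf_eq_conicHull H ▸ isClosed_conicHull _ _

theorem sum_mul_nonneg_of_mem_coneOf {H : Matrix (Fin r) (Fin n) ℝ} {z q : Fin r → ℝ}
    (hz : z ∈ coneOf H) (hq : q ∈ dualCone H) : 0 ≤ ∑ i, z i * q i := by
  obtain ⟨y, hy, rfl⟩ := hz
  have hswap : ∑ i, (H *ᵥ y) i * q i = ∑ j, y j * ∑ i, H i j * q i := by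
    simp only [Matrix.mulVec, dotProduct, sum_mul, mul_sum]
    rw [sum_comm]
    exact sum_congr rfl fun j _ => sum_congr rfl fun i _ => by ring
  rw [hswap]
  exact sum_nonneg fun j _ => mul_nonneg (hy j) (hq j)

theorem mem_coneOf_of_forall_mem_dualCone (H : Matrix (Fin r) (Fin n) ℝ) {z : Fin r → ℝ}
    (h : ∀ q ∈ dualCone H, 0 ≤ ∑ i, z i * q i) : z ∈ coneOf H := by
  classical
  by_contra hz
  let K : ProperCone ℝ (Fin r → ℝ) :=
    { carrier := coneOf H
      add_mem' := by
        rintro _ _ ⟨y, hy, rfl⟩ ⟨y', hy', rfl⟩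
        exact ⟨y + y', fun j => add_nonneg (hy j) (hy' j), Matrix.mulVec_add H y y'⟩
      zero_mem' := ⟨0, fun _ => le_rfl, Matrix.mulVec_zero H⟩
      smul_mem' := by
        rintro c _ ⟨y, hy, rfl⟩
        exact ⟨(c : ℝ) • y, fun j => mul_nonneg c.2 (hy j), Matrix.mulVec_smul H (c : ℝ) y⟩
      isClosed' := isClosed_coneOf H }
  obtain ⟨f, hfK, hfz⟩ := K.hyperplane_separation_point hz
  set q : Fin r → ℝ := fun i => f (Pi.single i 1)
  have hf (x : Fin r → ℝ) : f x = ∑ i, x i * q i := by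
    simpa [q, single_eq_ite, eq_comm] using
      LinearMap.pi_apply_eq_sum_univ (f : (Fin r → ℝ) →ₗ[ℝ] ℝ) x
  have hq : q ∈ dualCone H := fun j => by
    simpa [hf] using hfK _ ⟨Pi.single j 1, fun k => by simp [Pi.single_apply, apply_ite],
      Matrix.mulVec_single_one H j⟩
  linarith [h q hq, hf z]

theorem sq_card_mul_sum_mul_sub_le {ι : Type*} [Fintype ι] (z q : ι → ℝ) :
    ((Fintype.card ι : ℝ) * ∑ i, z i * q i - (∑ i, z i) * ∑ i, q i) ^ 2 ≤
      (Fintype.card ι * ∑ i, z i ^ 2 - (∑ i, z i) ^ 2) *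
        (Fintype.card ι * ∑ i, q i ^ 2 - (∑ i, q i) ^ 2) := by
  rcases (Nat.cast_nonneg (Fintype.card ι) : (0 : ℝ) ≤ Fintype.card ι).eq_or_lt with hN | hN
  · have : IsEmpty ι := Fintype.card_eq_zero_iff.mp (by exact_mod_cast hN.symm)
    simp
  -- Cauchy–Schwarz for the centred vectors `card ι • f - (∑ f) • 1`
  have hcentred (f g : ι → ℝ) :
      ∑ i, (Fintype.card ι * f i - ∑ j, f j) * (Fintype.card ι * g i - ∑ j, g j) =
        Fintype.card ι * (Fintype.card ι * ∑ i, f i * g i - (∑ i, f i) * ∑ i, g i) := by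
    have (i : ι) : (Fintype.card ι * f i - ∑ j, f j) * (Fintype.card ι * g i - ∑ j, g j) =
        (Fintype.card ι : ℝ) ^ 2 * (f i * g i) - (Fintype.card ι * ∑ j, g j) * f i
          - (Fintype.card ι * ∑ j, f j) * g i + (∑ j, f j) * ∑ j, g j := by ring
    simp only [this, sum_add_distrib, sum_sub_distrib, ← mul_sum, sum_const, card_univ,
      nsmul_eq_mul]
    ring
  have hcs := sum_mul_sq_le_sq_mul_sq univ (fun i => Fintype.card ι * z i - ∑ j, z j)
    (fun i => Fintype.card ι * q i - ∑ j, q j)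
  have hsq (f : ι → ℝ) : ∑ i, (Fintype.card ι * f i - ∑ j, f j) ^ 2 =
      Fintype.card ι * (Fintype.card ι * ∑ i, f i ^ 2 - (∑ i, f i) ^ 2) := by
    simpa only [sq] using hcentred f f
  rw [hcentred, hsq, hsq] at hcs
  refine le_of_mul_le_mul_left ?_ (pow_pos hN 2)
  linarith

def sscDual (r : ℕ) : Set (Fin r → ℝ) := {q | enorm2 q ≤ ∑ i, q i}

theorem sum_mul_nonneg_of_mem_sscCone (hr : 2 ≤ r) {z q : Fin r → ℝ} (hz : z ∈ sscCone r)
    (hq : q ∈ sscDual r) : 0 ≤ ∑ i, z i * q i := by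
  have hr1 : (1 : ℝ) < r := by exact_mod_cast hr
  set a := ∑ i, z i
  set b := ∑ i, q i
  have ha : 0 ≤ a := (mul_nonneg (Real.sqrt_nonneg _) (enorm2_nonneg z)).trans hz
  have hb : 0 ≤ b := (enorm2_nonneg q).trans hq
  have hz2 : (r - 1) * ∑ i, z i ^ 2 ≤ a ^ 2 := by
    have := pow_le_pow_left₀ (mul_nonneg (Real.sqrt_nonneg _) (enorm2_nonneg z)) hz 2
    rwa [mul_pow, Real.sq_sqrt (by linarith), sq_enorm2] at this
  have hq2 : ∑ i, q i ^ 2 ≤ b ^ 2 := by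
    simpa only [sq_enorm2] using pow_le_pow_left₀ (enorm2_nonneg q) hq 2
  have hqc : b ^ 2 ≤ r * ∑ i, q i ^ 2 := by
    simpa using sq_sum_le_card_mul_sum_sq (s := univ) (f := q)
  -- the centred parts of `z` and `q` have norms at most `a / √(r (r-1))` and `b √((r-1)/r)`,
  -- whose product `ab / r` is the inner product of the components along `e`
  have hprod : (r * ∑ i, z i ^ 2 - a ^ 2) * (r * ∑ i, q i ^ 2 - b ^ 2) ≤ (a * b) ^ 2 := by
    have hX : (r - 1) * (r * ∑ i, z i ^ 2 - a ^ 2) ≤ a ^ 2 := by nlinarith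
    have hY : r * ∑ i, q i ^ 2 - b ^ 2 ≤ (r - 1) * b ^ 2 := by nlinarith
    refine le_of_mul_le_mul_left ?_ (by linarith : (0 : ℝ) < r - 1)
    calc (r - 1) * ((r * ∑ i, z i ^ 2 - a ^ 2) * (r * ∑ i, q i ^ 2 - b ^ 2))
        ≤ a ^ 2 * (r * ∑ i, q i ^ 2 - b ^ 2) := by
          rw [← mul_assoc]; exact mul_le_mul_of_nonneg_right hX (by linarith)
      _ ≤ a ^ 2 * ((r - 1) * b ^ 2) := mul_le_mul_of_nonneg_left hY (sq_nonneg a)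
      _ = (r - 1) * (a * b) ^ 2 := by ring
  have hcs := sq_card_mul_sum_mul_sub_le z q
  rw [Fintype.card_fin] at hcs
  have hrP := (abs_le_of_sq_le_sq' (hcs.trans hprod) (mul_nonneg ha hb)).1
  exact (mul_nonneg_iff_of_pos_left (by linarith : (0 : ℝ) < r)).mp (by linarith)

theorem one_sub_mem_sscCone {w : Fin r → ℝ} (hw : enorm2 w = 1) :
    (fun i => 1 - w i) ∈ sscCone r := by
  have hr : (1 : ℝ) ≤ r := by
    rcases Nat.eq_zero_or_pos r with rfl | hr
    · simp [enorm2] at hw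
    · exact_mod_cast hr
  set u := ∑ i, w i
  have hu : u ≤ r := by
    simpa using sum_le_sum fun i (_ : i ∈ univ) =>
      (le_abs_self (w i)).trans ((abs_le_enorm2 w i).trans hw.le)
  have hsum : ∑ i, (1 - w i) = r - u := by simp [sum_sub_distrib, u]
  have hsq : enorm2 (fun i => 1 - w i) ^ 2 = r - 2 * u + 1 := by
    have hw2 := sq_enorm2 w
    rw [hw, one_pow] at hw2
    simp only [sq_enorm2, sub_sq, sum_add_distrib, sum_sub_distrib, ← mul_sum, ← hw2]
    simp [u]
  show √(r - 1) * enorm2 _ ≤ ∑ i, (1 - w i)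
  rw [hsum, ← Real.sqrt_sq (enorm2_nonneg _), ← Real.sqrt_mul (by linarith), hsq,
    Real.sqrt_le_iff]
  exact ⟨by linarith, by nlinarith [sq_nonneg (u - 1)]⟩

theorem dualCone_subset_sscDual_of_sscCone_subset {H : Matrix (Fin r) (Fin n) ℝ}
    (h : sscCone r ⊆ coneOf H) : dualCone H ⊆ sscDual r := by
  intro q hq
  rcases eq_or_ne q 0 with rfl | hq0
  · simp [sscDual, enorm2]
  have hN : 0 < enorm2 q := (enorm2_nonneg q).lt_of_ne' (enorm2_eq_zero.not.mpr hq0)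
  have hw : enorm2 ((enorm2 q)⁻¹ • q) = 1 := by
    rw [enorm2_smul, abs_inv, abs_of_pos hN, inv_mul_cancel₀ hN.ne']
  have hinner := sum_mul_nonneg_of_mem_coneOf (h (one_sub_mem_sscCone hw)) hq
  have hcalc : ∑ i, (1 - ((enorm2 q)⁻¹ • q) i) * q i = ∑ i, q i - enorm2 q := by
    simp only [Pi.smul_apply, smul_eq_mul, sub_mul, one_mul, sum_sub_distrib, mul_assoc,
      ← mul_sum, ← sq, ← sq_enorm2]
    field_simp
  show enorm2 q ≤ ∑ i, q i
  linarith

theorem sscCone_subset_coneOf_iff (hr : 2 ≤ r) (H : Matrix (Fin r) (Fin n) ℝ) :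
    sscCone r ⊆ coneOf H ↔ dualCone H ⊆ sscDual r :=
  ⟨dualCone_subset_sscDual_of_sscCone_subset, fun h _ hz =>
    mem_coneOf_of_forall_mem_dualCone H fun _ hq => sum_mul_nonneg_of_mem_sscCone hr hz (h hq)⟩

variable {H : Matrix (Fin r) (Fin n) ℝ}

def NCSSC (H : Matrix (Fin r) (Fin n) ℝ) : Prop :=
  ∀ i : Fin r, (fun j => (1 : ℝ) - (if j = i then 1 else 0)) ∈ coneOf H

theorem smul_mem_dualCone {c : ℝ} (hc : 0 ≤ c) {q : Fin r → ℝ} (hq : q ∈ dualCone H) :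
    c • q ∈ dualCone H := fun j => by
  simpa [mul_left_comm _ c, ← mul_sum] using mul_nonneg hc (hq j)

theorem le_sum_of_mem_dualCone (hnc : NCSSC H) {q : Fin r → ℝ} (hq : q ∈ dualCone H)
    (i : Fin r) : q i ≤ ∑ k, q k := by
  have := sum_mul_nonneg_of_mem_coneOf (hnc i) hq
  simp only [sub_mul, one_mul, ite_mul, zero_mul, sum_sub_distrib, sum_ite_eq', mem_univ,
    if_true] at this
  linarith

theorem eq_zero_of_mem_dualCone_of_sum_nonpos (hr : 2 ≤ r) (hH : ∀ i j, 0 ≤ H i j)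
    (hnc : NCSSC H) {q : Fin r → ℝ} (hq : q ∈ dualCone H) (hs : ∑ i, q i ≤ 0) : q = 0 := by
  have hle (i : Fin r) : q i ≤ 0 := (le_sum_of_mem_dualCone hnc hq i).trans hs
  -- `H ≥ 0` and `q ≤ 0` force `Hᵀq = 0`, so `-q` lies in the dual cone as well
  have hneg : -q ∈ dualCone H := fun j => by
    simpa [sum_neg_distrib] using
      sum_nonpos fun i (_ : i ∈ univ) => mul_nonpos_of_nonneg_of_nonpos (hH i j) (hle i)
  have heq (i : Fin r) : q i = ∑ k, q k :=
    le_antisymm (le_sum_of_mem_dualCone hnc hq i)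
      (by simpa [sum_neg_distrib] using le_sum_of_mem_dualCone hnc hneg i)
  have hs0 : ∑ k, q k = 0 := by
    have hsum : ∑ k, q k = r * ∑ k, q k := by
      conv_lhs => rw [sum_congr rfl fun i _ => heq i]
      simp
    have : (1 : ℝ) < r := by exact_mod_cast hr
    nlinarith
  exact funext fun i => (heq i).trans hs0

theorem neg_one_lt_of_sum_eq_one {y : Fin r → ℝ} (hs : ∑ i, y i = 1) (hn : enorm2 y ≤ 1)
    (k : Fin r) : -1 < y k := by
  by_contra! hk
  have hrest : ∑ i ∈ univ.erase k, y i ^ 2 = 0 := by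
    have hsplit := add_sum_erase univ (fun i => y i ^ 2) (mem_univ k)
    have hsq : ∑ i, y i ^ 2 ≤ 1 := by
      rw [← sq_enorm2]; nlinarith [enorm2_nonneg y]
    exact le_antisymm (by nlinarith) (sum_nonneg fun i _ => sq_nonneg _)
  have hrest' : ∑ i ∈ univ.erase k, y i = 0 := sum_eq_zero fun i hi =>
    pow_eq_zero_iff two_ne_zero |>.mp ((sum_eq_zero_iff_of_nonneg fun i _ => sq_nonneg (y i)).mp
      hrest i hi)
  linarith [add_sum_erase univ y (mem_univ k)]

theorem neg_one_le_of_qp_bound (hH : ∀ i j, 0 ≤ H i j)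
    (hqp : ∀ x : Fin r → ℝ, ∑ i, x i = 1 → x ∈ dualCone H → (∀ i, -1 ≤ x i ∧ x i ≤ 1) →
      enorm2 x ≤ 1)
    {x : Fin r → ℝ} (hs : ∑ i, x i = 1) (hx : x ∈ dualCone H) (hle : ∀ i, x i ≤ 1)
    (i : Fin r) : -1 ≤ x i := by
  by_contra! hi
  obtain ⟨k, -, hk⟩ := univ.exists_min_image x ⟨i, mem_univ i⟩
  have hr : (1 : ℝ) ≤ r := by exact_mod_cast Fin.pos i
  set c : ℝ := (r : ℝ)⁻¹
  have hc : 0 < c := by positivity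
  have hc1 : c ≤ 1 := inv_le_one_of_one_le₀ hr
  have hxk : x k < -1 := (hk i (mem_univ i)).trans_lt hi
  -- slide from the centre `c • 1` towards `x` until the smallest coordinate reaches `-1`
  set t := (1 + c) / (c - x k)
  have hden : 0 < c - x k := by linarith
  have ht0 : 0 < t := by positivity
  have ht1 : t < 1 := (div_lt_one hden).mpr (by linarith)
  set y : Fin r → ℝ := fun j => (1 - t) * c + t * x j
  have hyk : y k = -1 := by
    have : t * (c - x k) = 1 + c := div_mul_cancel₀ _ hden.ne'
    simp only [y]; linarith
  have hys : ∑ j, y j = 1 := by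
    simp only [y, sum_add_distrib, ← mul_sum, hs, sum_const, card_univ, Fintype.card_fin,
      nsmul_eq_mul, c]
    field_simp
    ring
  have hy : y ∈ dualCone H := fun j => by
    have : ∑ i, H i j * y i = (1 - t) * c * ∑ i, H i j + t * ∑ i, H i j * x i := by
      simp only [y, mul_add, sum_add_distrib, mul_sum]
      exact congrArg₂ _ (sum_congr rfl fun _ _ => by ring) (sum_congr rfl fun _ _ => by ring)
    rw [this]
    exact add_nonneg (mul_nonneg (mul_nonneg (by linarith) hc.le)
      (sum_nonneg fun i _ => hH i j)) (mul_nonneg ht0.le (hx j))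
  have hybox (j : Fin r) : -1 ≤ y j ∧ y j ≤ 1 := by
    have := hk j (mem_univ j)
    have := hle j
    constructor <;> simp only [y] <;> nlinarith
  linarith [neg_one_lt_of_sum_eq_one hys (hqp y hys hy hybox) k]

theorem dualCone_subset_sscDual_of_ncssc (hr : 2 ≤ r) (hH : ∀ i j, 0 ≤ H i j) (hnc : NCSSC H)
    (hqp : ∀ x : Fin r → ℝ, ∑ i, x i = 1 → x ∈ dualCone H → (∀ i, -1 ≤ x i ∧ x i ≤ 1) →
      enorm2 x ≤ 1) :
    dualCone H ⊆ sscDual r := by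
  intro q hq
  rcases le_or_gt (∑ i, q i) 0 with hs | hs
  · rw [eq_zero_of_mem_dualCone_of_sum_nonpos hr hH hnc hq hs]
    simp [sscDual, enorm2]
  set x := (∑ i, q i)⁻¹ • q
  have hxs : ∑ i, x i = 1 := by
    simp only [x, Pi.smul_apply, smul_eq_mul, ← mul_sum, inv_mul_cancel₀ hs.ne']
  have hx : x ∈ dualCone H := smul_mem_dualCone (inv_nonneg.mpr hs.le) hq
  have hle (i : Fin r) : x i ≤ 1 := hxs ▸ le_sum_of_mem_dualCone hnc hx i
  have hnorm := hqp x hxs hx fun i => ⟨neg_one_le_of_qp_bound hH hqp hxs hx hle i, hle i⟩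
  rwa [enorm2_smul, abs_inv, abs_of_pos hs, inv_mul_le_iff₀ hs, mul_one] at hnorm

theorem qp_maximizers_eq_of_ssc2 (hH : ∀ i j, 0 ≤ H i j)
    (hssc2 : ∀ q ∈ dualCone H, ∑ i, q i = enorm2 q →
      ∃ (i : Fin r) (α : ℝ), 0 ≤ α ∧ q = fun k => α * (if k = i then 1 else 0)) :
    {x : Fin r → ℝ | ∑ i, x i = 1 ∧ x ∈ dualCone H ∧ (∀ i, -1 ≤ x i ∧ x i ≤ 1) ∧ enorm2 x = 1}
      = {x | ∃ i : Fin r, x = fun k => if k = i then 1 else 0} := by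
  ext x
  constructor
  · rintro ⟨hs, hx, -, hn⟩
    obtain ⟨i, α, -, rfl⟩ := hssc2 x hx (hs.trans hn.symm)
    obtain rfl : α = 1 := by simpa using hs
    exact ⟨i, by simp⟩
  · rintro ⟨i, rfl⟩
    refine ⟨by simp, fun j => by simpa using hH i j, fun k => ?_, ?_⟩
    · dsimp only
      split_ifs <;> norm_num
    · rw [← single_eq_ite, enorm2_single]

theorem ssc2_of_qp_maximizers_eq (hr : 0 < r)
    (hmax : {x : Fin r → ℝ | ∑ i, x i = 1 ∧ x ∈ dualCone H ∧ (∀ i, -1 ≤ x i ∧ x i ≤ 1) ∧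
      enorm2 x = 1} = {x | ∃ i : Fin r, x = fun k => if k = i then 1 else 0})
    (q : Fin r → ℝ) (hq : q ∈ dualCone H) (hs : ∑ i, q i = enorm2 q) :
    ∃ (i : Fin r) (α : ℝ), 0 ≤ α ∧ q = fun k => α * (if k = i then 1 else 0) := by
  rcases eq_or_ne q 0 with rfl | hq0
  · exact ⟨⟨0, hr⟩, 0, le_rfl, funext fun k => (zero_mul _).symm⟩
  have hN : 0 < enorm2 q := (enorm2_nonneg q).lt_of_ne' (enorm2_eq_zero.not.mpr hq0)
  set x := (enorm2 q)⁻¹ • q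
  have hxn : enorm2 x = 1 := by
    rw [enorm2_smul, abs_inv, abs_of_pos hN, inv_mul_cancel₀ hN.ne']
  have hxs : ∑ i, x i = 1 := by
    simp only [x, Pi.smul_apply, smul_eq_mul, ← mul_sum, hs, inv_mul_cancel₀ hN.ne']
  have hx : x ∈ dualCone H := smul_mem_dualCone (inv_nonneg.mpr hN.le) hq
  have hmem : x ∈ {x : Fin r → ℝ | ∑ i, x i = 1 ∧ x ∈ dualCone H ∧
      (∀ i, -1 ≤ x i ∧ x i ≤ 1) ∧ enorm2 x = 1} :=
    ⟨hxs, hx, fun i => abs_le.mp (hxn ▸ abs_le_enorm2 x i), hxn⟩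
  rw [hmax] at hmem
  obtain ⟨i, hi⟩ := hmem
  refine ⟨i, enorm2 q, hN.le, funext fun k => ?_⟩
  have := congrFun hi k
  simp only [x, Pi.smul_apply, smul_eq_mul] at this
  rw [← this, mul_inv_cancel_left₀ hN.ne']

end SSC

/-- Theorem 4.1: `H ≥ 0` satisfies the SSC iff (i) the NC-SSC holds, and (ii) the
maximum of `‖x‖₂` over `{x : eᵀx = 1, Hᵀx ≥ 0, -1 ≤ xᵢ ≤ 1}` equals 1 with the set
of maximizers exactly `{eᵢ}ᵢ`. -/
theorem ssc_iff_ncssc_and_qp {r n : ℕ} (hr : 2 ≤ r) (H : Matrix (Fin r) (Fin n) ℝ)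
    (hH : ∀ i j, 0 ≤ H i j) :
    (sscCone r ⊆ coneOf H ∧
      ∀ q : Fin r → ℝ, (∀ j, 0 ≤ ∑ i, H i j * q i) → (∑ i, q i) = enorm2 q →
        ∃ (i : Fin r) (α : ℝ), 0 ≤ α ∧ q = fun k => α * (if k = i then 1 else 0)) ↔
    ((∀ i : Fin r, (fun j => (1 : ℝ) - (if j = i then 1 else 0)) ∈ coneOf H) ∧
      (∀ x : Fin r → ℝ, (∑ i, x i) = 1 → (∀ j, 0 ≤ ∑ i, H i j * x i) →
        (∀ i, -1 ≤ x i ∧ x i ≤ 1) → enorm2 x ≤ 1) ∧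
      {x : Fin r → ℝ | (∑ i, x i) = 1 ∧ (∀ j, 0 ≤ ∑ i, H i j * x i) ∧
          (∀ i, -1 ≤ x i ∧ x i ≤ 1) ∧ enorm2 x = 1}
        = {x : Fin r → ℝ | ∃ i : Fin r, x = fun k => if k = i then 1 else 0}) := by
  constructor
  · rintro ⟨hssc1, hssc2⟩
    have hdual := (sscCone_subset_coneOf_iff hr H).mp hssc1
    exact ⟨fun i => hssc1 (one_sub_mem_sscCone (single_eq_ite i ▸ enorm2_single i)),
      fun x hs hx _ => hs ▸ hdual hx, qp_maximizers_eq_of_ssc2 hH hssc2⟩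
  · rintro ⟨hnc, hqp, hmax⟩
    exact ⟨(sscCone_subset_coneOf_iff hr H).mpr (dualCone_subset_sscDual_of_ncssc hr hH hnc hqp),
      ssc2_of_qp_maximizers_eq (by omega) hmax⟩
end
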